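/- arXiv:2111.06171 — 4 statements merged into one kernel-verified Lean document; each statement's English description precedes it below -/
import Mathlib

section
/- Deterministic PPAM one-step contraction: let f be differentiable and μ-strongly convex with minimizer x⋆, μ > 0, η > 0, 0 < β < 1, ζ > 0. If x_{t+1} satisfies x_{t+1} = x_t - η∇f(x_{t+1}) + β(x_t - x_{t-1}), then (1 + ημ)² ‖x_{t+1} - x⋆‖² ≤ (1+β)²(1+ζ)‖x_t - x⋆‖² + β²(1 + 1/ζ)‖x_{t-1} - x⋆‖². -/
open RealInnerProductSpace

set_option maxHeartbeats 1000000 in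
/-- Deterministic PPAM one-step contraction: if `f` is differentiable and `μ`-strongly
convex with minimizer `x⋆`, `μ > 0`, `η > 0`, `0 < β < 1`, `ζ > 0`, and
`x_{t+1} = x_t - η∇f(x_{t+1}) + β(x_t - x_{t-1})`, then
`(1 + ημ)² ‖x_{t+1} - x⋆‖² ≤ (1+β)²(1+ζ)‖x_t - x⋆‖² + β²(1 + 1/ζ)‖x_{t-1} - x⋆‖²`. -/
theorem ppam_one_step_contraction {p : ℕ} (f : EuclideanSpace ℝ (Fin p) → ℝ)
    (μ η β ζ : ℝ) (hμ : 0 < μ) (hη : 0 < η) (hβ0 : 0 < β) (hβ1 : β < 1) (hζ : 0 < ζ)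
    (hf : Differentiable ℝ f)
    (hsc : ∀ x y : EuclideanSpace ℝ (Fin p),
      ⟪gradient f x - gradient f y, x - y⟫ ≥ μ * ‖x - y‖ ^ 2)
    (xstar : EuclideanSpace ℝ (Fin p)) (hmin : ∀ y, f xstar ≤ f y)
    (xt xtm1 xtp1 : EuclideanSpace ℝ (Fin p))
    (hupdate : xtp1 = xt - η • gradient f xtp1 + β • (xt - xtm1)) :
    (1 + η * μ) ^ 2 * ‖xtp1 - xstar‖ ^ 2 ≤
      (1 + β) ^ 2 * (1 + ζ) * ‖xt - xstar‖ ^ 2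
        + β ^ 2 * (1 + 1 / ζ) * ‖xtm1 - xstar‖ ^ 2 := by
  set g := gradient f xtp1 with hg
  have hgs : gradient f xstar = 0 := by
    have hloc : IsLocalMin f xstar := Filter.Eventually.of_forall hmin
    have hfd : fderiv ℝ f xstar = 0 := hloc.fderiv_eq_zero
    simp [gradient, hfd]
  set a := xtp1 - xstar with ha
  set u := xt - xstar with hu
  set w := xtm1 - xstar with hw
  have key1 : ⟪g, a⟫ ≥ μ * ‖a‖ ^ 2 := by
    have := hsc xtp1 xstar
    simpa [hgs, ← hg, ← ha] using this
  have key2 : μ * ‖a‖ ≤ ‖g‖ := by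
    rcases eq_or_lt_of_le (norm_nonneg a) with h0 | h0
    · rw [← h0]; simpa using norm_nonneg g
    · have hcs : ⟪g, a⟫ ≤ ‖g‖ * ‖a‖ := real_inner_le_norm g a
      have : μ * ‖a‖ * ‖a‖ ≤ ‖g‖ * ‖a‖ := by nlinarith
      exact le_of_mul_le_mul_right this h0
  have heq : a + η • g = (1 + β) • u - β • w := by
    rw [ha, hu, hw, hupdate]; module
  have h1 : ‖a + η • g‖ ^ 2 = ‖a‖ ^ 2 + 2 * (η * ⟪g, a⟫) + η ^ 2 * ‖g‖ ^ 2 := by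
    rw [norm_add_sq_real, real_inner_smul_right, norm_smul, real_inner_comm]
    rw [Real.norm_eq_abs, abs_of_pos hη]
    ring
  have h3 : ‖(1 + β) • u - β • w‖ ^ 2 =
      (1 + β) ^ 2 * ‖u‖ ^ 2 - 2 * ((1 + β) * β * ⟪u, w⟫) + β ^ 2 * ‖w‖ ^ 2 := by
    rw [norm_sub_sq_real, real_inner_smul_left, real_inner_smul_right, norm_smul, norm_smul]
    rw [Real.norm_eq_abs, Real.norm_eq_abs, abs_of_pos hβ0,
      abs_of_pos (by linarith : (0:ℝ) < 1 + β)]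
    ring
  have h4 : |⟪u, w⟫| ≤ ‖u‖ * ‖w‖ := abs_real_inner_le_norm u w
  have h4' : -(‖u‖ * ‖w‖) ≤ ⟪u, w⟫ := neg_le_of_abs_le h4
  have hζi : ζ * (1 / ζ) = 1 := mul_one_div_cancel (ne_of_gt hζ)
  have hAg : (1 + η * μ) ^ 2 * ‖a‖ ^ 2 ≤ ‖a + η • g‖ ^ 2 := by
    rw [h1]
    have hsq : μ * ‖a‖ * (μ * ‖a‖) ≤ ‖g‖ * ‖g‖ :=
      mul_self_le_mul_self (mul_nonneg hμ.le (norm_nonneg a)) key2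
    nlinarith [mul_le_mul_of_nonneg_left key1 hη.le, sq_nonneg η]
  rw [heq, h3] at hAg
  have young : 2 * ((1 + β) * ‖u‖ * (β * ‖w‖)) ≤
      ζ * ((1 + β) * ‖u‖) ^ 2 + (1 / ζ) * (β * ‖w‖) ^ 2 := by
    nlinarith [sq_nonneg (ζ * ((1 + β) * ‖u‖) - β * ‖w‖), hζ, hζi]
  have hip : -(2 * ((1 + β) * β * ⟪u, w⟫)) ≤ 2 * ((1 + β) * ‖u‖ * (β * ‖w‖)) := by
    nlinarith [h4', mul_pos (show (0:ℝ) < 1 + β by linarith) hβ0]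
  nlinarith [hAg, young, hip]
end

section
/- Deterministic PPAM one-step bound with tuned ζ: under the assumptions of the previous contraction result with ζ = 4/(1+β)² - 1 and 0 < β < 1, ‖x_{t+1} - x⋆‖² ≤ (4/(1+ημ)²) ‖x_t - x⋆‖² + (4β²/((1+ημ)²(4 - (1+β)²))) ‖x_{t-1} - x⋆‖². -/
open RealInnerProductSpace

set_option maxHeartbeats 1600000

/-- Deterministic PPAM one-step bound with tuned `ζ = 4/(1+β)² - 1`:
`‖x_{t+1} - x⋆‖² ≤ (4/(1+ημ)²)‖x_t - x⋆‖²
  + (4β²/((1+ημ)²(4 - (1+β)²)))‖x_{t-1} - x⋆‖²`. -/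
theorem ppam_one_step_tuned {p : ℕ} (f : EuclideanSpace ℝ (Fin p) → ℝ)
    (μ η β : ℝ) (hμ : 0 < μ) (hη : 0 < η) (hβ0 : 0 < β) (hβ1 : β < 1)
    (hf : Differentiable ℝ f)
    (hsc : ∀ x y : EuclideanSpace ℝ (Fin p),
      ⟪gradient f x - gradient f y, x - y⟫ ≥ μ * ‖x - y‖ ^ 2)
    (xstar : EuclideanSpace ℝ (Fin p)) (hmin : ∀ y, f xstar ≤ f y)
    (xt xtm1 xtp1 : EuclideanSpace ℝ (Fin p))
    (hupdate : xtp1 = xt - η • gradient f xtp1 + β • (xt - xtm1)) :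
    ‖xtp1 - xstar‖ ^ 2 ≤
      4 / (1 + η * μ) ^ 2 * ‖xt - xstar‖ ^ 2
        + 4 * β ^ 2 / ((1 + η * μ) ^ 2 * (4 - (1 + β) ^ 2)) * ‖xtm1 - xstar‖ ^ 2 := by
  -- gradient at the minimizer is zero
  have hgstar : gradient f xstar = 0 := by
    have hloc : IsLocalMin f xstar := (isMinOn_univ_iff.2 hmin).isLocalMin Filter.univ_mem
    have := hloc.fderiv_eq_zero
    simp [gradient, this]
  set y := xtp1 - xstar with hy
  set a := xt - xstar with ha
  set b := xtm1 - xstar with hb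
  set g := gradient f xtp1 with hg
  -- strong monotonicity at xtp1, xstar
  have h1 : ⟪g, y⟫ ≥ μ * ‖y‖ ^ 2 := by
    have := hsc xtp1 xstar
    rwa [hgstar, sub_zero] at this
  -- algebraic identity: y + η • g = (1+β) • a - β • b
  have hiden : y + η • g = (1 + β) • a - β • b := by
    rw [hy, ha, hb, hupdate]
    module
  set c := (1 + β) • a - β • b with hc
  have hη807 : (0:ℝ) < 1 + η * μ := by positivity
  have h2 : (1 + η * μ) * ‖y‖ ^ 2 ≤ ⟪c, y⟫ := by
    have : ⟪c, y⟫ = ‖y‖ ^ 2 + η * ⟪g, y⟫ := by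
      rw [← hiden, inner_add_left, real_inner_smul_left, real_inner_self_eq_norm_sq]
    rw [this]
    nlinarith [h1, sq_nonneg ‖y‖]
  have hcs : ⟪c, y⟫ ≤ ‖c‖ * ‖y‖ := real_inner_le_norm c y
  -- (1+ημ)^2 ‖y‖^2 ≤ ‖c‖^2
  have h3 : (1 + η * μ) ^ 2 * ‖y‖ ^ 2 ≤ ‖c‖ ^ 2 := by
    rcases eq_or_ne y 0 with h0 | h0
    · simp [h0]
    · have hyp : 0 < ‖y‖ := norm_pos_iff.2 h0
      have h4 : (1 + η * μ) * ‖y‖ ≤ ‖c‖ := by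
        have := h2.trans hcs
        nlinarith
      nlinarith [norm_nonneg c]
  -- Young / peak-point inequality on ‖c‖²
  have hd : (0:ℝ) < 4 - (1 + β) ^ 2 := by nlinarith
  have h5 : ‖c‖ ^ 2 ≤ 4 * ‖a‖ ^ 2 + 4 * β ^ 2 / (4 - (1 + β) ^ 2) * ‖b‖ ^ 2 := by
    have htri : ‖c‖ ≤ (1 + β) * ‖a‖ + β * ‖b‖ := by
      rw [hc]
      refine (norm_sub_le ((1 + β) • a) (β • b)).trans_eq ?_
      rw [norm_smul, norm_smul, Real.norm_eq_abs, Real.norm_eq_abs,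
        abs_of_pos hβ0, abs_of_pos (by linarith : (0:ℝ) < 1 + β)]
    have hC2 : ‖c‖ ^ 2 ≤ ((1 + β) * ‖a‖ + β * ‖b‖) ^ 2 := by
      nlinarith [htri, norm_nonneg c]
    have key : (4 - (1 + β) ^ 2) * ‖c‖ ^ 2
        ≤ (4 - (1 + β) ^ 2) * (4 * ‖a‖ ^ 2) + 4 * β ^ 2 * ‖b‖ ^ 2 := by
      nlinarith [mul_le_mul_of_nonneg_left hC2 hd.le,
        sq_nonneg ((4 - (1 + β) ^ 2) * ‖a‖ - (1 + β) * β * ‖b‖)]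
    have h5' : ‖c‖ ^ 2 ≤ ((4 - (1 + β) ^ 2) * (4 * ‖a‖ ^ 2) + 4 * β ^ 2 * ‖b‖ ^ 2)
        / (4 - (1 + β) ^ 2) := by
      rw [le_div_iff₀ hd]
      linarith [key]
    refine h5'.trans_eq ?_
    field_simp
  -- conclude
  have hS : (0:ℝ) < (1 + η * μ) ^ 2 := by positivity
  have h6 : ‖y‖ ^ 2 ≤ (4 * ‖a‖ ^ 2 + 4 * β ^ 2 / (4 - (1 + β) ^ 2) * ‖b‖ ^ 2)
      / (1 + η * μ) ^ 2 := by
    rw [le_div_iff₀ hS]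
    nlinarith [h3, h5]
  have heq : (4 * ‖a‖ ^ 2 + 4 * β ^ 2 / (4 - (1 + β) ^ 2) * ‖b‖ ^ 2) / (1 + η * μ) ^ 2
      = 4 / (1 + η * μ) ^ 2 * ‖a‖ ^ 2
        + 4 * β ^ 2 / ((1 + η * μ) ^ 2 * (4 - (1 + β) ^ 2)) * ‖b‖ ^ 2 := by
    field_simp
  rw [heq] at h6
  exact h6
end

section
/- Complex-eigenvalue case of PPAM stability: if ((β+1)/(1+ηλ))² - 4β/(1+ηλ) < 0, then both (complex) eigenvalues of R = (1/(1+ηλ))[[β, λ],[-ηβ, 1]] have modulus sqrt(β/(1+ηλ)), and this modulus is < 1 if and only if η > (β-1)/λ (for λ > 0). -/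
/-- Complex-eigenvalue case of PPAM stability: if
`((β+1)/(1+ηλ))² - 4β/(1+ηλ) < 0`, then every (complex) eigenvalue of
`R = (1/(1+ηλ))[[β, λ],[-ηβ, 1]]` has modulus `sqrt(β/(1+ηλ))`, and this modulus is
`< 1` iff `η > (β-1)/λ` (for `λ > 0`). -/
theorem ppam_complex_eigenvalue_case (η β lam : ℝ) (hlam : 0 < lam)
    (hpos : 0 < 1 + η * lam)
    (hΔ : ((β + 1) / (1 + η * lam)) ^ 2 - 4 * β / (1 + η * lam) < 0) :
    let R : Matrix (Fin 2) (Fin 2) ℂ :=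
      ((1 : ℂ) / (1 + η * lam)) • !![(β : ℂ), lam; -η * β, 1]
    (∀ z ∈ spectrum ℂ R, ‖z‖ = Real.sqrt (β / (1 + η * lam))) ∧
    (Real.sqrt (β / (1 + η * lam)) < 1 ↔ η > (β - 1) / lam) := by
  intro R
  set c : ℝ := 1 + η * lam with hc
  have hcne : c ≠ 0 := hpos.ne'
  have hcC : (c : ℂ) ≠ 0 := by exact_mod_cast hcne
  have h44 : 4 * β / c = 4 * (β / c) := by ring
  have hΔ' : ((β + 1) / c) ^ 2 - 4 * (β / c) < 0 := by rw [← h44]; exact hΔ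
  have hd0 : 0 ≤ β / c := by nlinarith [sq_nonneg ((β + 1) / c)]
  have hΔc : (β + 1) ^ 2 - 4 * β * c < 0 := by
    have h3 : (((β + 1) / c) ^ 2 - 4 * (β / c)) * c ^ 2 < 0 :=
      mul_neg_of_neg_of_pos hΔ' (by positivity)
    calc (β + 1) ^ 2 - 4 * β * c = (((β + 1) / c) ^ 2 - 4 * (β / c)) * c ^ 2 := by
          field_simp
      _ < 0 := h3
  have hβc : lam * (η * β) = β * c - β := by rw [hc]; ring
  constructor
  · intro z hz
    rw [spectrum.mem_iff] at hz
    have hdet : Matrix.det (algebraMap ℂ (Matrix (Fin 2) (Fin 2) ℂ) z - R) = 0 := by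
      by_contra h
      exact hz ((Matrix.isUnit_iff_isUnit_det _).2 (Ne.isUnit h))
    have h2 : ((1 : ℂ) + η * lam) = (c : ℂ) := by push_cast [hc]; ring
    have hM : algebraMap ℂ (Matrix (Fin 2) (Fin 2) ℂ) z - R =
        !![z - β / (c : ℂ), -lam / c; η * β / c, z - 1 / c] := by
      ext i j
      fin_cases i <;> fin_cases j <;>
        simp [R, Matrix.algebraMap_matrix_apply, Matrix.sub_apply, Matrix.smul_apply,
          smul_eq_mul, h2] <;> field_simp <;> ring
    rw [hM, Matrix.det_fin_two_of] at hdet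
    have hdet' : (z * (c : ℂ) - β) * (z * c - 1) + lam * (η * β) = 0 := by
      field_simp at hdet
      linear_combination hdet
    rw [Complex.ext_iff] at hdet'
    obtain ⟨hre, him⟩ := hdet'
    simp [Complex.mul_re, Complex.mul_im] at hre him
    have hnsq : (z.re * z.re + z.im * z.im) * c = β := by
      rcases eq_or_ne z.im 0 with hy | hy
      · exfalso
        rw [hy] at hre
        nlinarith [sq_nonneg (2 * z.re * c - (β + 1)), hre, hΔc, hβc]
      · have h0 : (z.im * c) * (2 * z.re * c - (β + 1)) = 0 := by linear_combination him
        rcases mul_eq_zero.mp h0 with h | h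
        · exact absurd h (mul_ne_zero hy hcne)
        · have hx : 2 * z.re * c = β + 1 := by linarith
          have hkey : c * ((z.re * z.re + z.im * z.im) * c - β) = 0 := by
            linear_combination -hre + hβc + z.re * c * hx
          rcases mul_eq_zero.mp hkey with h' | h'
          · exact absurd h' hcne
          · linarith
    rw [Complex.norm_def, Complex.normSq_apply]
    congr 1
    rw [eq_div_iff hcne]
    linarith [hnsq]
  · have hs1 : Real.sqrt 1 = 1 := Real.sqrt_one
    rw [show (1 : ℝ) = √1 by simp, Real.sqrt_lt_sqrt_iff hd0,
      div_lt_one hpos, gt_iff_lt, div_lt_iff₀ hlam, hc]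
    constructor <;> intro h <;> linarith
end

section
/- SPPAM accelerates over SPPA: for μ > 0, η > 0, 0 < β < 1 with ημ > 1, the inequality 2/(1+ημ)² + sqrt(4/(1+ημ)⁴ + 4β²/((1+ημ)²(4-(1+β)²))) < 1/(1+2ημ) holds if and only if 4β²/(4-(1+β)²) < (η²μ² - 6ημ - 3)/(1+2ημ)². -/
/-- SPPAM accelerates over SPPA: for `μ > 0`, `η > 0`, `0 < β < 1` with `ημ > 1`,
`2/(1+ημ)² + sqrt(4/(1+ημ)⁴ + 4β²/((1+ημ)²(4-(1+β)²))) < 1/(1+2ημ)`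
iff `4β²/(4-(1+β)²) < (η²μ² - 6ημ - 3)/(1+2ημ)²`. -/
theorem sppam_acceleration_condition (η μ β : ℝ) (hη : 0 < η) (hμ : 0 < μ)
    (hβ0 : 0 < β) (hβ1 : β < 1) (hημ : 1 < η * μ) :
    (2 / (1 + η * μ) ^ 2 +
        Real.sqrt (4 / (1 + η * μ) ^ 4
          + 4 * β ^ 2 / ((1 + η * μ) ^ 2 * (4 - (1 + β) ^ 2)))
      < 1 / (1 + 2 * η * μ)) ↔
      4 * β ^ 2 / (4 - (1 + β) ^ 2)
        < (η ^ 2 * μ ^ 2 - 6 * (η * μ) - 3) / (1 + 2 * η * μ) ^ 2 := by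
  rw [show (1 : ℝ) + 2 * η * μ = 1 + 2 * (η * μ) by ring,
    show η ^ 2 * μ ^ 2 = (η * μ) ^ 2 by ring]
  set a := η * μ with ha
  have ha1 : (1:ℝ) < a := hημ
  have h1a : (0:ℝ) < 1 + a := by linarith
  have h2a : (0:ℝ) < 1 + 2 * a := by linarith
  have hb : (0:ℝ) < 4 - (1 + β) ^ 2 := by nlinarith
  set S := 4 / (1 + a) ^ 4 + 4 * β ^ 2 / ((1 + a) ^ 2 * (4 - (1 + β) ^ 2)) with hS
  have hS0 : 0 ≤ S := by
    apply add_nonneg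
    · positivity
    · positivity
  set B := 4 * β ^ 2 / (4 - (1 + β) ^ 2) with hB
  have hBpos : 0 < B := by positivity
  set T := (a ^ 2 - 6 * a - 3) / (1 + 2 * a) ^ 2 with hT
  set c := 1 / (1 + 2 * a) with hc
  set d := 2 / (1 + a) ^ 2 with hd
  have hid : (c - d) ^ 2 - S = (T - B) / (1 + a) ^ 2 := by
    rw [hc, hd, hS, hT, hB]
    field_simp
    ring
  constructor
  · intro h
    have hs0 := Real.sqrt_nonneg S
    have hcd : Real.sqrt S < c - d := by rw [hc, hd]; linarith
    have hSlt : S < (c - d) ^ 2 := by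
      nlinarith [Real.sq_sqrt hS0]
    have h2 : 0 < (T - B) / (1 + a) ^ 2 := by rw [← hid]; linarith
    have h3 : 0 < T - B := by
      have h4 := mul_pos h2 (pow_pos h1a 2)
      rwa [div_mul_cancel₀] at h4
      positivity
    linarith
  · intro h
    have h3 : 0 < T - B := by linarith
    have hT3 : 0 < a ^ 2 - 6 * a - 3 := by
      have hTpos : 0 < T := lt_trans hBpos (by linarith)
      rw [hT, div_pos_iff] at hTpos
      rcases hTpos with ⟨h1, _⟩ | ⟨_, h2⟩
      · exact h1
      · nlinarith
    have hcd : 0 < c - d := by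
      rw [hc, hd, div_sub_div _ _ (by positivity) (by positivity), div_pos_iff]
      left
      refine ⟨by nlinarith, by positivity⟩
    have hSlt : S < (c - d) ^ 2 := by
      rw [← sub_pos, hid]
      positivity
    have hfin : Real.sqrt S < c - d := (Real.sqrt_lt' hcd).mpr hSlt
    rw [hc, hd] at hfin; linarith
end
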